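/- arXiv:1202.0542 — 2 statements merged into one kernel-verified Lean document; each statement's English description precedes it below -/
import Mathlib

section
/- Let E₀, E₁, E₂ ∈ 𝒢 be mutually distant, and let W ∈ 𝒢 satisfy W ∼ E₀, W not distant from E₁ and W not distant from E₂. Let pᵢ = Eᵢ ∩ W for i ∈ {1,2} be the unique intersection points. Then the line L = p₁ + p₂ meets E₀; in fact, L is the unique line through p₁ meeting E₀ and E₂. -/
/-- The Grassmannian `𝒢` of all subspaces `X ≤ V` with `X ≅ V/X`. -/
def Grass (K V : Type*) [DivisionRing K] [AddCommGroup V] [Module K V] :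
    Set (Submodule K V) :=
  {X | Nonempty (X ≃ₗ[K] (V ⧸ X))}

variable {K V : Type*} [DivisionRing K] [AddCommGroup V] [Module K V]

/-- The dimension of the quotient `E / M` (computed as the rank of `E ⧸ (M ∩ E)`). -/
noncomputable def quotRank (M E : Submodule K V) : Cardinal :=
  Module.rank K (E ⧸ (M.comap E.subtype))

/-- Two subspaces are adjacent if `dim (X/(X ⊓ Y)) = dim (Y/(X ⊓ Y)) = 1`. -/
def Adjacent (X Y : Submodule K V) : Prop :=
  quotRank (X ⊓ Y) X = 1 ∧ quotRank (X ⊓ Y) Y = 1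

/-- Two subspaces are distant if they are complementary: `X ⊕ Y = V`. -/
def Distant (X Y : Submodule K V) : Prop := IsCompl X Y

/-- The star `𝒢[M⟩` with centre `M`. -/
def starSet (M : Submodule K V) : Set (Submodule K V) :=
  {E | M ≤ E ∧ quotRank M E = 1}

/-- `M` is the centre of a star, i.e. there is `X ∈ 𝒢` with `M ≤ X`, `dim (X/M) = 1`. -/
def IsStarCentre (M : Submodule K V) : Prop :=
  ∃ X ∈ Grass K V, M ≤ X ∧ quotRank M X = 1

/-- The top `𝒢⟨N]` with carrier `N`. -/
def topSet (N : Submodule K V) : Set (Submodule K V) :=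
  {E | E ≤ N ∧ quotRank E N = 1}

/-- `N` is the carrier of a top, i.e. there is `X ∈ 𝒢` with `X ≤ N`, `dim (N/X) = 1`. -/
def IsTopCarrier (N : Submodule K V) : Prop :=
  ∃ X ∈ Grass K V, X ≤ N ∧ quotRank X N = 1

/-- An adjacency clique: a set of mutually adjacent elements of `𝒢`. -/
def IsAdjClique (A : Set (Submodule K V)) : Prop :=
  A ⊆ Grass K V ∧ A.Pairwise Adjacent

/-- A maximal adjacency clique. -/
def IsMaxAdjClique (A : Set (Submodule K V)) : Prop :=
  IsAdjClique A ∧ ∀ B, IsAdjClique B → A ⊆ B → A = B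

/-- The pencil `𝒢[M,N] = {X ∈ 𝒢 | M < X < N}`. -/
def pencilSet (M N : Submodule K V) : Set (Submodule K V) :=
  {X ∈ Grass K V | M < X ∧ X < N}

/-- `(M, N)` defines a pencil: there is `X ∈ 𝒢` with `M ≤ X ≤ N` and
`dim (X/M) = dim (N/X) = 1`. -/
def IsPencilPair (M N : Submodule K V) : Prop :=
  ∃ X ∈ Grass K V, M ≤ X ∧ X ≤ N ∧ quotRank M X = 1 ∧ quotRank X N = 1

/-- A pencil in `𝒢`. -/
def IsPencil (S : Set (Submodule K V)) : Prop :=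
  ∃ M N : Submodule K V, IsPencilPair M N ∧ S = pencilSet M N

/-- A point is a one-dimensional subspace. -/
def IsPoint (p : Submodule K V) : Prop := Module.rank K p = 1

/-- A line is a two-dimensional subspace. -/
def IsLine (L : Submodule K V) : Prop := Module.rank K L = 2

/-- Two subspaces meet if they have a common point, i.e. nonzero intersection. -/
def Meets (X Y : Submodule K V) : Prop := X ⊓ Y ≠ ⊥

/-- A distant clique: a set of mutually distant elements of `𝒢`. -/
def IsDistantClique (R : Set (Submodule K V)) : Prop :=
  R ⊆ Grass K V ∧ R.Pairwise Distant

/-- A set has at least three elements. -/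
def HasThree (R : Set (Submodule K V)) : Prop :=
  ∃ A ∈ R, ∃ B ∈ R, ∃ C ∈ R, A ≠ B ∧ A ≠ C ∧ B ≠ C

/-- Condition (R2): if a line meets three mutually distinct elements of `R`
then it meets all elements of `R`. -/
def MeetsThreeMeetsAll (R : Set (Submodule K V)) : Prop :=
  ∀ L : Submodule K V, IsLine L →
    ∀ E₀ ∈ R, ∀ E₁ ∈ R, ∀ E₂ ∈ R, E₀ ≠ E₁ → E₀ ≠ E₂ → E₁ ≠ E₂ →
      Meets L E₀ → Meets L E₁ → Meets L E₂ → ∀ E ∈ R, Meets L E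

/-- A partial `Z`-regulus: conditions (R1) and (R2). -/
def IsPartialZRegulus (R : Set (Submodule K V)) : Prop :=
  (IsDistantClique R ∧ HasThree R) ∧ MeetsThreeMeetsAll R

/-- A `Z`-regulus: a partial `Z`-regulus that is maximal, i.e. not properly
contained in any partial `Z`-regulus. -/
def IsZRegulus (R : Set (Submodule K V)) : Prop :=
  IsPartialZRegulus R ∧ ∀ S : Set (Submodule K V), IsPartialZRegulus S → R ⊆ S → R = S

/-- A directrix of `R`: a line meeting all elements of `R`. -/
def IsDirectrix (R : Set (Submodule K V)) (L : Submodule K V) : Prop :=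
  IsLine L ∧ ∀ E ∈ R, Meets L E

/-- Condition (⊠2) from Theorem `Zreg`. -/
def BoxTwo (R : Set (Submodule K V)) : Prop :=
  ∀ E₀ ∈ R, ∀ E₁ ∈ R, ∀ E₂ ∈ R, E₀ ≠ E₁ → E₀ ≠ E₂ → E₁ ≠ E₂ →
    ∀ W ∈ Grass K V, Adjacent W E₀ → ¬ Distant W E₁ → ¬ Distant W E₂ →
      ∀ E ∈ R, ¬ Distant W E

section AuxLemmas

variable {K V : Type*} [DivisionRing K] [AddCommGroup V] [Module K V]

lemma aux_le_span_singleton {p : Submodule K V} (h : Module.rank K p ≤ 1)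
    {x : V} (hx : x ∈ p) (hx0 : x ≠ 0) : p ≤ Submodule.span K {x} := by
  obtain ⟨v₀, hv₀⟩ := rank_le_one_iff.mp h
  obtain ⟨a, ha⟩ := hv₀ ⟨x, hx⟩
  have ha0 : a ≠ 0 := by
    rintro rfl
    apply hx0
    have := congrArg (Subtype.val) ha
    simpa using this.symm
  intro y hy
  obtain ⟨c, hc⟩ := hv₀ ⟨y, hy⟩
  have key : (c * a⁻¹) • (⟨x, hx⟩ : p) = ⟨y, hy⟩ := by
    rw [← ha, smul_smul, mul_assoc, inv_mul_cancel₀ ha0, mul_one]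
    exact hc
  have : (c * a⁻¹) • x = y := congrArg Subtype.val key
  rw [Submodule.mem_span_singleton]
  exact ⟨c * a⁻¹, this⟩

lemma aux_quot_le_one {M E : Submodule K V} (h : quotRank M E ≤ 1)
    {x : V} (hxE : x ∈ E) (hxM : x ∉ M) {y : V} (hyE : y ∈ E) :
    ∃ c : K, y - c • x ∈ M := by
  set N := M.comap E.subtype with hN
  have h' : Module.rank K (E ⧸ N) ≤ 1 := h
  obtain ⟨v₀, hv₀⟩ := rank_le_one_iff.mp h'
  have hxN : (⟨x, hxE⟩ : E) ∉ N := by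
    intro hmem
    exact hxM hmem
  have hxq : N.mkQ ⟨x, hxE⟩ ≠ 0 := by
    rw [Submodule.mkQ_apply, Ne, Submodule.Quotient.mk_eq_zero]
    exact hxN
  obtain ⟨a, ha⟩ := hv₀ (N.mkQ ⟨x, hxE⟩)
  have ha0 : a ≠ 0 := by
    rintro rfl
    exact hxq (by rw [← ha, zero_smul])
  obtain ⟨c, hc⟩ := hv₀ (N.mkQ ⟨y, hyE⟩)
  refine ⟨c * a⁻¹, ?_⟩
  have hq0 : N.mkQ (⟨y, hyE⟩ - (c * a⁻¹) • ⟨x, hxE⟩) = 0 := by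
    rw [map_sub, map_smul, ← ha, ← hc, smul_smul, mul_assoc, inv_mul_cancel₀ ha0,
      mul_one, sub_self]
  rw [Submodule.mkQ_apply, Submodule.Quotient.mk_eq_zero] at hq0
  exact hq0

lemma aux_exists_not_mem {M E : Submodule K V} (h : quotRank M E = 1) :
    ∃ x ∈ E, x ∉ M := by
  set N := M.comap E.subtype with hN
  have h' : Module.rank K (E ⧸ N) = 1 := h
  have hnt : Nontrivial (E ⧸ N) := by
    refine (rank_pos_iff_nontrivial (R := K)).mp ?_
    rw [h']
    exact zero_lt_one
  obtain ⟨q, hq⟩ := exists_ne (0 : E ⧸ N)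
  obtain ⟨e, rfl⟩ := N.mkQ_surjective q
  refine ⟨e.1, e.2, fun hm => hq ?_⟩
  rw [Submodule.mkQ_apply, Submodule.Quotient.mk_eq_zero]
  exact hm

lemma aux_point_lemma {E₀ E W : Submodule K V}
    (hdist : Distant E₀ E) (hadj : Adjacent W E₀) (hWE : ¬ Distant W E) :
    (E ⊓ W) ≠ ⊥ ∧ Module.rank K ↥(E ⊓ W) ≤ 1 := by
  have hdist' : IsCompl E₀ E := hdist
  have hd : E₀ ⊓ E = ⊥ := disjoint_iff.mp hdist'.disjoint
  set N := (W ⊓ E₀).comap W.subtype with hNdef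
  constructor
  · intro hbot
    apply hWE
    constructor
    · rw [disjoint_iff, inf_comm]
      exact hbot
    · rw [codisjoint_iff, eq_top_iff]
      obtain ⟨w, hwW, hwM⟩ := aux_exists_not_mem hadj.1
      have hwE₀ : w ∉ E₀ := fun hw => hwM (Submodule.mem_inf.mpr ⟨hwW, hw⟩)
      have hwtop : w ∈ E₀ ⊔ E := by
        rw [codisjoint_iff.mp hdist'.codisjoint]; exact Submodule.mem_top
      obtain ⟨e₀, he₀, e₁, he₁, hsum⟩ := Submodule.mem_sup.mp hwtop
      have he₀M : e₀ ∉ W ⊓ E₀ := by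
        intro hm
        have he₁W : e₁ ∈ W := by
          have : e₁ = w - e₀ := by rw [← hsum]; abel
          rw [this]
          exact sub_mem hwW (Submodule.mem_inf.mp hm).1
        have : e₁ ∈ E ⊓ W := Submodule.mem_inf.mpr ⟨he₁, he₁W⟩
        rw [hbot, Submodule.mem_bot] at this
        apply hwE₀
        rw [← hsum, this, add_zero]
        exact he₀
      intro y _
      have hytop : y ∈ E₀ ⊔ E := by
        rw [codisjoint_iff.mp hdist'.codisjoint]; exact Submodule.mem_top
      obtain ⟨a₀, ha₀, a₁, ha₁, hysum⟩ := Submodule.mem_sup.mp hytop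
      obtain ⟨c, hc⟩ := aux_quot_le_one (le_of_eq hadj.2) he₀ he₀M ha₀
      have he₀sup : e₀ ∈ W ⊔ E := by
        have : e₀ = w - e₁ := by rw [← hsum]; abel
        rw [this]
        exact sub_mem (Submodule.mem_sup_left hwW) (Submodule.mem_sup_right he₁)
      have hmsup : a₀ - c • e₀ ∈ W ⊔ E :=
        Submodule.mem_sup_left (Submodule.mem_inf.mp hc).1
      have : y = (a₀ - c • e₀) + c • e₀ + a₁ := by rw [← hysum]; abel
      rw [this]
      exact add_mem (add_mem hmsup (Submodule.smul_mem _ _ he₀sup))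
        (Submodule.mem_sup_right ha₁)
  · have h1 : quotRank (W ⊓ E₀) W = 1 := hadj.1
    set f : ↥(E ⊓ W) →ₗ[K] (W ⧸ N) :=
      N.mkQ.comp (Submodule.inclusion inf_le_right) with hf
    have hinj : Function.Injective f := by
      rw [← LinearMap.ker_eq_bot, eq_bot_iff]
      rintro ⟨z, hz⟩ hker
      have : Submodule.Quotient.mk (Submodule.inclusion
          (inf_le_right : E ⊓ W ≤ W) ⟨z, hz⟩) = (0 : W ⧸ N) := hker
      rw [Submodule.Quotient.mk_eq_zero] at this
      have hzE₀ : z ∈ E₀ := ((Submodule.mem_inf.mp this).2 : z ∈ E₀)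
      have : z ∈ E₀ ⊓ E := Submodule.mem_inf.mpr ⟨hzE₀, (Submodule.mem_inf.mp hz).1⟩
      rw [hd, Submodule.mem_bot] at this
      simpa using this
    calc Module.rank K ↥(E ⊓ W) ≤ Module.rank K (W ⧸ N) :=
          LinearMap.rank_le_of_injective f hinj
      _ = 1 := h1

lemma aux_le_span_pair {L' : Submodule K V} (h2 : Module.rank K L' ≤ 2)
    {x u : V} (hx : x ∈ L') (hu : u ∈ L')
    (hind : LinearIndependent K ![x, u]) :
    L' ≤ Submodule.span K {x, u} := by
  intro v hv
  by_contra hvs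
  have hrange : Set.range ![x, u] = {x, u} := by
    ext z
    simp only [Matrix.range_cons, Matrix.range_empty, Set.union_empty, Set.union_singleton,
      Set.mem_insert_iff, Set.mem_singleton_iff]
    tauto
  have hins : LinearIndependent K (Fin.cons v ![x, u] : Fin 3 → V) := by
    rw [linearIndependent_fin_cons]
    refine ⟨hind, ?_⟩
    rw [hrange]
    exact hvs
  set g : Fin 3 → L' := Fin.cons ⟨v, hv⟩ ![⟨x, hx⟩, ⟨u, hu⟩] with hg
  have hcomp : (L'.subtype ∘ g) = (Fin.cons v ![x, u] : Fin 3 → V) := by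
    funext i
    fin_cases i <;> rfl
  have hgind : LinearIndependent K g :=
    LinearIndependent.of_comp L'.subtype (by rw [hcomp]; exact hins)
  have hcard := hgind.cardinal_lift_le_rank
  rw [Cardinal.mk_fin] at hcard
  have h3 : (3 : Cardinal) ≤ Cardinal.lift.{0} (Module.rank K L') := by
    simpa using hcard
  have h2' : Cardinal.lift.{0} (Module.rank K L') ≤ (2 : Cardinal) := by
    simpa using Cardinal.lift_le.{0}.mpr h2
  have : (3 : Cardinal) ≤ 2 := h3.trans h2'
  norm_num at this

end AuxLemmas

/-- Lemma 4.10. With `pᵢ = Eᵢ ⊓ W`, the line `L = p₁ + p₂` meets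
`E₀`; in fact `L` is the unique line through `p₁` meeting `E₀` and `E₂`. -/
theorem line_meets (hV : 2 < Module.rank K V)
    (E₀ E₁ E₂ W : Submodule K V)
    (h₀ : E₀ ∈ Grass K V) (h₁ : E₁ ∈ Grass K V) (h₂ : E₂ ∈ Grass K V)
    (hW : W ∈ Grass K V)
    (h01 : Distant E₀ E₁) (h02 : Distant E₀ E₂) (h12 : Distant E₁ E₂)
    (hadj : Adjacent W E₀) (hW1 : ¬ Distant W E₁) (hW2 : ¬ Distant W E₂) :
    IsLine ((E₁ ⊓ W) ⊔ (E₂ ⊓ W)) ∧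
    Meets ((E₁ ⊓ W) ⊔ (E₂ ⊓ W)) E₀ ∧
    (∀ L' : Submodule K V, IsLine L' → E₁ ⊓ W ≤ L' → Meets L' E₀ → Meets L' E₂ →
      L' = (E₁ ⊓ W) ⊔ (E₂ ⊓ W)) := by
  have h01' : IsCompl E₀ E₁ := h01
  have h02' : IsCompl E₀ E₂ := h02
  have h12' : IsCompl E₁ E₂ := h12
  have hd01 : E₀ ⊓ E₁ = ⊥ := disjoint_iff.mp h01'.disjoint
  have hd02 : E₀ ⊓ E₂ = ⊥ := disjoint_iff.mp h02'.disjoint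
  have hd12 : E₁ ⊓ E₂ = ⊥ := disjoint_iff.mp h12'.disjoint
  obtain ⟨hp₁ne, hp₁le⟩ := aux_point_lemma h01 hadj hW1
  obtain ⟨hp₂ne, hp₂le⟩ := aux_point_lemma h02 hadj hW2
  have hp12 : (E₁ ⊓ W) ⊓ (E₂ ⊓ W) = ⊥ := by
    rw [eq_bot_iff, ← hd12]
    exact inf_le_inf inf_le_left inf_le_left
  have hr₁ : Module.rank K ↥(E₁ ⊓ W) = 1 := by
    refine le_antisymm hp₁le ?_
    have : Nontrivial ↥(E₁ ⊓ W) := Submodule.nontrivial_iff_ne_bot.mpr hp₁ne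
    exact Cardinal.one_le_iff_pos.mpr rank_pos
  have hr₂ : Module.rank K ↥(E₂ ⊓ W) = 1 := by
    refine le_antisymm hp₂le ?_
    have : Nontrivial ↥(E₂ ⊓ W) := Submodule.nontrivial_iff_ne_bot.mpr hp₂ne
    exact Cardinal.one_le_iff_pos.mpr rank_pos
  have hline : Module.rank K ↥((E₁ ⊓ W) ⊔ (E₂ ⊓ W)) = 2 := by
    have h := Submodule.rank_sup_add_rank_inf_eq (E₁ ⊓ W) (E₂ ⊓ W)
    rw [hp12, rank_bot, add_zero, hr₁, hr₂] at h
    rw [h]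
    exact one_add_one_eq_two
  obtain ⟨x₁, hx₁p, hx₁0⟩ := (Submodule.ne_bot_iff _).mp hp₁ne
  obtain ⟨x₂, hx₂p, hx₂0⟩ := (Submodule.ne_bot_iff _).mp hp₂ne
  have hx₁E₁ : x₁ ∈ E₁ := (Submodule.mem_inf.mp hx₁p).1
  have hx₁W : x₁ ∈ W := (Submodule.mem_inf.mp hx₁p).2
  have hx₂E₂ : x₂ ∈ E₂ := (Submodule.mem_inf.mp hx₂p).1
  have hx₂W : x₂ ∈ W := (Submodule.mem_inf.mp hx₂p).2
  have hx₂M : x₂ ∉ W ⊓ E₀ := by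
    intro hm
    apply hx₂0
    have : x₂ ∈ E₀ ⊓ E₂ := Submodule.mem_inf.mpr ⟨(Submodule.mem_inf.mp hm).2, hx₂E₂⟩
    rwa [hd02, Submodule.mem_bot] at this
  obtain ⟨c, hz⟩ := aux_quot_le_one (le_of_eq hadj.1) hx₂W hx₂M hx₁W
  have hzE₀ : x₁ - c • x₂ ∈ E₀ := (Submodule.mem_inf.mp hz).2
  have hz0 : x₁ - c • x₂ ≠ 0 := by
    intro h0
    rw [sub_eq_zero] at h0
    apply hx₁0
    have : x₁ ∈ E₁ ⊓ E₂ :=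
      Submodule.mem_inf.mpr ⟨hx₁E₁, h0 ▸ Submodule.smul_mem _ _ hx₂E₂⟩
    rwa [hd12, Submodule.mem_bot] at this
  have hc0 : c ≠ 0 := by
    intro h0
    rw [h0, zero_smul, sub_zero] at hzE₀
    apply hx₁0
    have : x₁ ∈ E₀ ⊓ E₁ := Submodule.mem_inf.mpr ⟨hzE₀, hx₁E₁⟩
    rwa [hd01, Submodule.mem_bot] at this
  have hzL : x₁ - c • x₂ ∈ (E₁ ⊓ W) ⊔ (E₂ ⊓ W) :=
    sub_mem (Submodule.mem_sup_left hx₁p)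
      (Submodule.mem_sup_right (Submodule.smul_mem _ _ hx₂p))
  have hmeets : Meets ((E₁ ⊓ W) ⊔ (E₂ ⊓ W)) E₀ := by
    rw [Meets, Submodule.ne_bot_iff]
    exact ⟨x₁ - c • x₂, Submodule.mem_inf.mpr ⟨hzL, hzE₀⟩, hz0⟩
  refine ⟨hline, hmeets, ?_⟩
  intro L' hL' hp₁L' hm0 hm2
  obtain ⟨u, hum, hu0⟩ := (Submodule.ne_bot_iff _).mp hm0
  obtain ⟨v, hvm, hv0⟩ := (Submodule.ne_bot_iff _).mp hm2
  have huL' : u ∈ L' := (Submodule.mem_inf.mp hum).1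
  have huE₀ : u ∈ E₀ := (Submodule.mem_inf.mp hum).2
  have hvL' : v ∈ L' := (Submodule.mem_inf.mp hvm).1
  have hvE₂ : v ∈ E₂ := (Submodule.mem_inf.mp hvm).2
  have hx₁L' : x₁ ∈ L' := hp₁L' hx₁p
  have hind : LinearIndependent K ![x₁, u] := by
    rw [LinearIndependent.pair_iff]
    intro s t hst
    have hs1 : s • x₁ ∈ E₀ := by
      have heq : s • x₁ = -(t • u) := eq_neg_of_add_eq_zero_left hst
      rw [heq]
      exact neg_mem (Submodule.smul_mem _ _ huE₀)
    have hs0 : s • x₁ = 0 := by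
      have : s • x₁ ∈ E₀ ⊓ E₁ :=
        Submodule.mem_inf.mpr ⟨hs1, Submodule.smul_mem _ _ hx₁E₁⟩
      rwa [hd01, Submodule.mem_bot] at this
    have hs : s = 0 := (smul_eq_zero.mp hs0).resolve_right hx₁0
    refine ⟨hs, ?_⟩
    rw [hs, zero_smul, zero_add] at hst
    exact (smul_eq_zero.mp hst).resolve_right hu0
  have hspan : L' ≤ Submodule.span K {x₁, u} :=
    aux_le_span_pair (le_of_eq hL') hx₁L' huL' hind
  obtain ⟨a, b, hab⟩ := Submodule.mem_span_pair.mp (hspan hvL')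
  have ha0 : a ≠ 0 := by
    intro h0
    rw [h0, zero_smul, zero_add] at hab
    apply hv0
    have : v ∈ E₀ ⊓ E₂ :=
      Submodule.mem_inf.mpr ⟨hab ▸ Submodule.smul_mem _ _ huE₀, hvE₂⟩
    rwa [hd02, Submodule.mem_bot] at this
  have hb0 : b ≠ 0 := by
    intro h0
    rw [h0, zero_smul, add_zero] at hab
    apply hv0
    have : v ∈ E₁ ⊓ E₂ :=
      Submodule.mem_inf.mpr ⟨hab ▸ Submodule.smul_mem _ _ hx₁E₁, hvE₂⟩
    rwa [hd12, Submodule.mem_bot] at this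
  have hveq : v = (a * c) • x₂ := by
    have hrw : v - (a * c) • x₂ = a • (x₁ - c • x₂) + b • u := by
      rw [smul_sub, smul_smul, ← hab]
      abel
    have hmem0 : v - (a * c) • x₂ ∈ E₀ := by
      rw [hrw]
      exact add_mem (Submodule.smul_mem _ _ hzE₀) (Submodule.smul_mem _ _ huE₀)
    have hmem2 : v - (a * c) • x₂ ∈ E₂ :=
      sub_mem hvE₂ (Submodule.smul_mem _ _ hx₂E₂)
    have : v - (a * c) • x₂ ∈ E₀ ⊓ E₂ := Submodule.mem_inf.mpr ⟨hmem0, hmem2⟩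
    rw [hd02, Submodule.mem_bot] at this
    rwa [sub_eq_zero] at this
  have hac0 : a * c ≠ 0 := mul_ne_zero ha0 hc0
  refine le_antisymm ?_ ?_
  · refine le_trans hspan ?_
    rw [Submodule.span_le]
    have hu_eq : u = b⁻¹ • ((a * c) • x₂ - a • x₁) := by
      have hbu : b • u = (a * c) • x₂ - a • x₁ := by
        rw [← hveq, ← hab]; abel
      rw [← hbu, smul_smul, inv_mul_cancel₀ hb0, one_smul]
    have humem : u ∈ (E₁ ⊓ W) ⊔ (E₂ ⊓ W) := by
      rw [hu_eq]
      exact Submodule.smul_mem _ _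
        (sub_mem (Submodule.mem_sup_right (Submodule.smul_mem _ _ hx₂p))
          (Submodule.mem_sup_left (Submodule.smul_mem _ _ hx₁p)))
    rintro t ht
    rcases ht with h | h
    · rw [SetLike.mem_coe, h]
      exact Submodule.mem_sup_left hx₁p
    · rw [Set.mem_singleton_iff] at h
      rw [SetLike.mem_coe, h]
      exact humem
  · refine sup_le hp₁L' ?_
    refine le_trans (aux_le_span_singleton hp₂le hx₂p hx₂0) ?_
    rw [Submodule.span_le, Set.singleton_subset_iff]
    have hx₂eq : x₂ = (a * c)⁻¹ • v := by
      rw [hveq, smul_smul, inv_mul_cancel₀ hac0, one_smul]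
    rw [SetLike.mem_coe, hx₂eq]
    exact Submodule.smul_mem _ _ hvL'
end

section
/- A subset ℛ of 𝒢 is a Z-regulus if, and only if, the following three conditions hold: (⊠1) ℛ is a distant clique with at least three elements; (⊠2) whenever three mutually distinct elements E₀, E₁, E₂ ∈ ℛ and some W ∈ 𝒢 satisfy W ∼ E₀, W not distant from E₁ and W not distant from E₂, then W is not distant from any E ∈ ℛ; (⊠3) ℛ is not properly contained in any subset of 𝒢 satisfying (⊠1) and (⊠2). -/
variable {K V : Type*} [DivisionRing K] [AddCommGroup V] [Module K V]

/-!
Subspaces of `V` form a complemented modular lattice whose atoms are the points, and `X ∼ Y`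
says that `X ⊓ Y` is covered by both `X` and `Y`; both directions are lattice arguments.

(R2) ⇒ (⊠2): if `W ∼ E₀` is not distant from `E₁` and `E₂`, then `W` meets both, since a
subspace adjacent to `E₀` and disjoint from a complement of `E₀` is a complement of it too.
So the line through a point of `W ⊓ E₁` and a point of `W ⊓ E₂` lies in `W` and therefore
meets the hyperplane `W ⊓ E₀` of `W`. By (R2) this line meets every `E ∈ ℛ`, hence `W` is not distant
from `E`.

(⊠2) ⇒ (R2): let a line `L = p₀ ⊔ p₂` meet `E₀, E₁, E₂` in the points `p₀, p₁, p₂` but miss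
`E`. Project `p₂` from `E` to the point `q = E₀ ⊓ (p₂ ⊔ E)`, choose a hyperplane `M` of `E₀`
through `p₀` missing `q`, and put `W = M ⊔ p₂`. Then `W ∼ E₀`, `W ⊇ L` is not distant from
`E₁` or `E₂`, and `W ⊕ E = V = E₀ ⊕ E` with `W ≅ E₀`, so `W ∈ 𝒢`, contradicting (⊠2).

Hence (R1) ∧ (R2) ⇔ (⊠1) ∧ (⊠2), and the maximality conditions (R3) and (⊠3) coincide.
-/

section ModularLattice

variable {α : Type*} [Lattice α] [IsModularLattice α]

theorem codisjoint_of_inf_covBy [BoundedOrder α] {W E₀ E₁ : α} (hW : ¬W ≤ E₀)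
    (hE₀ : W ⊓ E₀ ⋖ E₀) (hc : Codisjoint E₀ E₁) (hd : Disjoint W E₁) : Codisjoint W E₁ := by
  rcases hE₀.eq_or_eq (c := (W ⊔ E₁) ⊓ E₀) (inf_le_inf_right _ le_sup_left) inf_le_right
    with hX | hX
  · refine absurd (eq_of_le_of_inf_le_of_le_sup (z := E₁) inf_le_left ?_ ?_) (hW ∘ inf_eq_left.mp)
    · exact hd.eq_bot ▸ bot_le
    · calc W ≤ W ⊔ E₁ := le_sup_left
        _ = (W ⊔ E₁) ⊓ E₀ ⊔ E₁ := by
          rw [inf_sup_assoc_of_le _ le_sup_right, hc.eq_top, inf_top_eq]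
        _ = W ⊓ E₀ ⊔ E₁ := by rw [hX]
  · rw [codisjoint_iff, eq_top_iff, ← hc.eq_top]
    exact sup_le (hX ▸ inf_le_left) le_sup_right

theorem not_disjoint_of_covBy [OrderBot α] {H W L a : α} (hH : H ⋖ W) (hL : L ≤ W)
    (ha : ⊥ < a) (haL : a < L) : ¬Disjoint L H := by
  intro hd
  by_cases hLH : L ≤ H
  · exact (ha.trans haL).ne' (hd.eq_bot_of_le hLH)
  have hsup : H ⊔ L = W :=
    (hH.eq_or_eq le_sup_left (sup_le hH.le hL)).resolve_left fun h => hLH (h ▸ le_sup_right)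
  have hcov : H ⊓ L ⋖ L := inf_covBy_of_covBy_sup_left (hsup ▸ hH)
  rw [inf_comm, hd.eq_bot] at hcov
  exact hcov.2 ha haL

variable [BoundedOrder α]

theorem isAtom_inf_sup_of_isCompl {E₀ E P : α} (hE : IsCompl E₀ E) (hP : IsAtom P)
    (hPE : Disjoint P E) : IsAtom (E₀ ⊓ (P ⊔ E)) := by
  have hsup : E ⊔ E₀ ⊓ (P ⊔ E) = E ⊔ P := by
    rw [← sup_inf_assoc_of_le _ le_sup_right, hE.symm.sup_eq_top, top_inf_eq, sup_comm]
  have hcov : E ⋖ E ⊔ E₀ ⊓ (P ⊔ E) :=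
    hsup ▸ covBy_sup_of_inf_covBy_right (hPE.symm.eq_bot ▸ hP.bot_covBy)
  have := inf_covBy_of_covBy_sup_left hcov
  rwa [(hE.symm.disjoint.mono_right inf_le_left).eq_bot, bot_covBy_iff] at this

theorem exists_isCompl_inf_covBy [ComplementedLattice α] {E₀ E P₀ P : α} (hE : IsCompl E₀ E)
    (hP₀ : P₀ ≤ E₀) (hP : IsAtom P) (hPE₀ : Disjoint P E₀) (hPE : Disjoint P (P₀ ⊔ E)) :
    ∃ W, W ⊓ E₀ ⋖ W ∧ W ⊓ E₀ ⋖ E₀ ∧ P₀ ⊔ P ≤ W ∧ IsCompl W E := by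
  set Q := E₀ ⊓ (P ⊔ E)
  have hQ : IsAtom Q := isAtom_inf_sup_of_isCompl hE hP (hPE.mono_right le_sup_right)
  have hQE : Q ⊔ E = P ⊔ E := by
    rw [sup_comm, ← sup_inf_assoc_of_le _ le_sup_right, hE.symm.sup_eq_top, top_inf_eq]
  have hQP₀ : Disjoint P₀ Q := by
    refine (hQ.not_le_iff_disjoint.mp fun h => hP.ne_bot (hPE.eq_bot_of_le ?_)).symm
    exact le_sup_left.trans (hQE ▸ sup_le_sup_right h E)
  obtain ⟨C, hP₀C, hC⟩ := hQP₀.exists_isCompl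
  set M := E₀ ⊓ C
  have hME₀ : M ≤ E₀ := inf_le_left
  have hMQ : M ⊔ Q = E₀ := by
    rw [inf_sup_assoc_of_le _ (inf_le_left : Q ≤ E₀), hC.sup_eq_top, inf_top_eq]
  have hMQd : Disjoint M Q := hC.disjoint.mono_left inf_le_right
  have hMP : Disjoint M P := (hPE₀.mono_right hME₀).symm
  have hPME : Disjoint P (M ⊔ E) := by
    refine hP.not_le_iff_disjoint.mp fun h => hQ.ne_bot (hMQd.eq_bot_of_ge ?_)
    calc Q ≤ (M ⊔ E) ⊓ E₀ := inf_le_inf_left _ (sup_le h le_sup_right) |>.trans_eq (inf_comm _ _)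
      _ = M := by rw [sup_inf_assoc_of_le _ hME₀, hE.symm.inf_eq_bot, sup_bot_eq]
  have hWE₀ : (M ⊔ P) ⊓ E₀ = M := by
    rw [sup_inf_assoc_of_le _ hME₀, hPE₀.eq_bot, sup_bot_eq]
  refine ⟨M ⊔ P, ?_, ?_, sup_le_sup_right (le_inf hP₀ hP₀C) P, ?_, ?_⟩
  · rw [hWE₀]
    exact covBy_sup_of_inf_covBy_right (hMP.eq_bot ▸ hP.bot_covBy)
  · rw [hWE₀, ← hMQ]
    exact covBy_sup_of_inf_covBy_right (hMQd.eq_bot ▸ hQ.bot_covBy)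
  · rw [disjoint_iff, eq_bot_iff]
    calc (M ⊔ P) ⊓ E ≤ ((M ⊔ P) ⊓ (M ⊔ E)) ⊓ E :=
          le_inf (inf_le_inf_left _ le_sup_right) inf_le_right
      _ = M ⊓ E := by rw [sup_inf_assoc_of_le _ le_sup_left, hPME.eq_bot, sup_bot_eq]
      _ ≤ ⊥ := (hE.disjoint.mono_left hME₀).le_bot
  · rw [codisjoint_iff, sup_assoc, ← hQE, ← sup_assoc, hMQ, hE.sup_eq_top]

end ModularLattice

open Module Submodule

theorem quotRank_eq_one_iff_covBy {M S : Submodule K V} (h : M ≤ S) :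
    quotRank M S = 1 ↔ M ⋖ S := by
  rw [covBy_iff_quot_is_simple h, isSimpleModule_iff_finrank_eq_one, quotRank,
    rank_eq_one_iff_finrank_eq_one]

theorem adjacent_iff_covBy {X Y : Submodule K V} :
    Adjacent X Y ↔ X ⊓ Y ⋖ X ∧ X ⊓ Y ⋖ Y := by
  rw [Adjacent, quotRank_eq_one_iff_covBy inf_le_left, quotRank_eq_one_iff_covBy inf_le_right]

theorem rank_add_one_of_covBy {M S : Submodule K V} (h : M ⋖ S) :
    Module.rank K M + 1 = Module.rank K S := by
  rw [← (quotRank_eq_one_iff_covBy h.le).mpr h, quotRank, add_comm,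
    ← (comapSubtypeEquivOfLe h.le).rank_eq, rank_quotient_add_rank]

theorem Adjacent.rank_eq {X Y : Submodule K V} (h : Adjacent X Y) :
    Module.rank K X = Module.rank K Y := by
  rw [adjacent_iff_covBy] at h
  rw [← rank_add_one_of_covBy h.1, rank_add_one_of_covBy h.2]

theorem isPoint_iff_isAtom {p : Submodule K V} : IsPoint p ↔ IsAtom p := by
  rw [IsPoint, rank_eq_one_iff_finrank_eq_one, ← isSimpleModule_iff_finrank_eq_one,
    isSimpleModule_iff_isAtom]

theorem isLine_sup_of_isAtom {p q : Submodule K V} (hp : IsAtom p) (hq : IsAtom q)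
    (hpq : p ≠ q) : IsLine (p ⊔ q) := by
  have h := rank_sup_add_rank_inf_eq p q
  rw [(hp.disjoint_of_ne hq hpq).eq_bot, rank_bot, add_zero, isPoint_iff_isAtom.mpr hp,
    isPoint_iff_isAtom.mpr hq, one_add_one_eq_two] at h
  exact h

theorem IsLine.sup_eq_of_isAtom {L p q : Submodule K V} (hL : IsLine L) (hp : IsAtom p)
    (hq : IsAtom q) (hpq : p ≠ q) (hpL : p ≤ L) (hqL : q ≤ L) : p ⊔ q = L := by
  have : Module.Finite K L := Module.finite_of_rank_eq_nat (n := 2) hL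
  refine eq_of_le_of_finrank_eq (sup_le hpL hqL) ?_
  rw [finrank_eq_of_rank_eq (n := 2) (isLine_sup_of_isAtom hp hq hpq),
    finrank_eq_of_rank_eq (n := 2) hL]

theorem meets_iff_not_disjoint {X Y : Submodule K V} : Meets X Y ↔ ¬Disjoint X Y :=
  disjoint_iff.not.symm

theorem meets_of_isAtom_le {p X Y : Submodule K V} (hp : IsAtom p) (hX : p ≤ X) (hY : p ≤ Y) :
    Meets X Y :=
  ne_bot_of_le_ne_bot hp.ne_bot (le_inf hX hY)

theorem Meets.exists_isAtom_le {X Y : Submodule K V} (h : Meets X Y) :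
    ∃ p, IsAtom p ∧ p ≤ X ∧ p ≤ Y := by
  obtain ⟨p, hp, hpXY⟩ := (eq_bot_or_exists_atom_le (X ⊓ Y)).resolve_left h
  exact ⟨p, hp, le_inf_iff.mp hpXY⟩

theorem mem_grass_of_isCompl {W E₀ E : Submodule K V} (hE₀ : E₀ ∈ Grass K V)
    (h₀ : IsCompl E₀ E) (hW : IsCompl W E) (hr : Module.rank K W = Module.rank K E₀) :
    W ∈ Grass K V := by
  obtain ⟨e₀⟩ := hE₀
  obtain ⟨e⟩ := nonempty_linearEquiv_of_rank_eq hr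
  exact ⟨e ≪≫ₗ e₀ ≪≫ₗ quotientEquivOfIsCompl E₀ E h₀ ≪≫ₗ (quotientEquivOfIsCompl W E hW).symm⟩

theorem boxTwo_of_meetsThreeMeetsAll {R : Set (Submodule K V)} (hR : R.Pairwise Distant)
    (hM : MeetsThreeMeetsAll R) : BoxTwo R := by
  intro E₀ hE₀ E₁ hE₁ E₂ hE₂ h01 h02 h12 W _ hadj hnd₁ hnd₂ E hE hWE
  rw [adjacent_iff_covBy] at hadj
  have hWE₀ : ¬W ≤ E₀ := fun h => hadj.1.lt.ne (inf_eq_left.mpr h)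
  have meets_W {Eᵢ} (hEᵢ : Eᵢ ∈ R) (h0i : E₀ ≠ Eᵢ) (hnd : ¬Distant W Eᵢ) : Meets W Eᵢ :=
    meets_iff_not_disjoint.mpr fun hd =>
      hnd ⟨hd, codisjoint_of_inf_covBy hWE₀ hadj.2 (hR hE₀ hEᵢ h0i).codisjoint hd⟩
  obtain ⟨p₁, hp₁, hp₁W, hp₁E₁⟩ := (meets_W hE₁ h01 hnd₁).exists_isAtom_le
  obtain ⟨p₂, hp₂, hp₂W, hp₂E₂⟩ := (meets_W hE₂ h02 hnd₂).exists_isAtom_le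
  have hp₁₂ : p₁ ≠ p₂ := by
    rintro rfl
    exact hp₁.ne_bot (disjoint_self.mp ((hR hE₁ hE₂ h12).disjoint.mono hp₁E₁ hp₂E₂))
  have hLW : p₁ ⊔ p₂ ≤ W := sup_le hp₁W hp₂W
  have hL₀ : Meets (p₁ ⊔ p₂) E₀ := by
    refine meets_iff_not_disjoint.mpr fun hd => not_disjoint_of_covBy hadj.1 hLW hp₁.bot_lt
      (left_lt_sup.mpr ?_) (hd.mono_right inf_le_right)
    exact fun h => hp₁₂ ((hp₁.le_iff_eq hp₂.ne_bot).mp h).symm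
  have hLE := hM _ (isLine_sup_of_isAtom hp₁ hp₂ hp₁₂) E₀ hE₀ E₁ hE₁ E₂ hE₂ h01 h02 h12 hL₀
    (meets_of_isAtom_le hp₁ le_sup_left hp₁E₁) (meets_of_isAtom_le hp₂ le_sup_right hp₂E₂) E hE
  exact meets_iff_not_disjoint.mp hLE (hWE.disjoint.mono_left hLW)

theorem meetsThreeMeetsAll_of_boxTwo {R : Set (Submodule K V)} (hR : IsDistantClique R)
    (hB : BoxTwo R) : MeetsThreeMeetsAll R := by
  intro L hL E₀ hE₀ E₁ hE₁ E₂ hE₂ h01 h02 h12 hL₀ hL₁ hL₂ E hE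
  rcases eq_or_ne E E₀ with rfl | hE₀E
  · exact hL₀
  have hE₀E' : IsCompl E₀ E := hR.2 hE₀ hE hE₀E.symm
  refine meets_iff_not_disjoint.mpr fun hLE => ?_
  obtain ⟨p₀, hp₀, hp₀L, hp₀E₀⟩ := hL₀.exists_isAtom_le
  obtain ⟨p₁, hp₁, hp₁L, hp₁E₁⟩ := hL₁.exists_isAtom_le
  obtain ⟨p₂, hp₂, hp₂L, hp₂E₂⟩ := hL₂.exists_isAtom_le
  have hp₀₂ : p₀ ≠ p₂ := by
    rintro rfl
    exact hp₀.ne_bot (disjoint_self.mp ((hR.2 hE₀ hE₂ h02).disjoint.mono hp₀E₀ hp₂E₂))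
  have hp₂E : Disjoint p₂ (p₀ ⊔ E) := by
    refine hp₂.not_le_iff_disjoint.mp fun h => hp₀₂ ((hp₀.le_iff_eq hp₂.ne_bot).mp ?_).symm
    calc p₂ ≤ (p₀ ⊔ E) ⊓ L := le_inf h hp₂L
      _ = p₀ := by rw [sup_inf_assoc_of_le _ hp₀L, inf_comm, hLE.eq_bot, sup_bot_eq]
  obtain ⟨W, hW, hWE₀, hLW, hWE⟩ := exists_isCompl_inf_covBy hE₀E' hp₀E₀ hp₂
    ((hR.2 hE₂ hE₀ h02.symm).disjoint.mono_left hp₂E₂) hp₂E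
  rw [hL.sup_eq_of_isAtom hp₀ hp₂ hp₀₂ hp₀L hp₂L] at hLW
  have hadj : Adjacent W E₀ := adjacent_iff_covBy.mpr ⟨hW, hWE₀⟩
  have not_distant {p Eᵢ} (hp : IsAtom p) (hpL : p ≤ L) (hpE : p ≤ Eᵢ) : ¬Distant W Eᵢ :=
    fun hd => meets_iff_not_disjoint.mp (meets_of_isAtom_le hp (hpL.trans hLW) hpE) hd.disjoint
  exact hB E₀ hE₀ E₁ hE₁ E₂ hE₂ h01 h02 h12 W
    (mem_grass_of_isCompl (hR.1 hE₀) hE₀E' hWE hadj.rank_eq) hadj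
    (not_distant hp₁ hp₁L hp₁E₁) (not_distant hp₂ hp₂L hp₂E₂) E hE hWE

theorem isPartialZRegulus_iff {R : Set (Submodule K V)} :
    IsPartialZRegulus R ↔ (IsDistantClique R ∧ HasThree R) ∧ BoxTwo R :=
  and_congr_right fun hR =>
    ⟨boxTwo_of_meetsThreeMeetsAll hR.1.2, meetsThreeMeetsAll_of_boxTwo hR.1⟩

theorem zRegulus_iff_box_general
    (R : Set (Submodule K V)) :
    IsZRegulus R ↔
      ((IsDistantClique R ∧ HasThree R) ∧ BoxTwo R ∧
        ∀ S : Set (Submodule K V),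
          (IsDistantClique S ∧ HasThree S) ∧ BoxTwo S → R ⊆ S → R = S) := by
  simp only [IsZRegulus, isPartialZRegulus_iff, and_assoc]

/-- Theorem 4.11. `R ⊆ 𝒢` is a `Z`-regulus iff it satisfies the
conditions (⊠1), (⊠2), (⊠3) formulated in terms of the distant relation. -/
theorem zRegulus_iff_box (hV : 2 < Module.rank K V)
    (R : Set (Submodule K V)) :
    IsZRegulus R ↔
      ((IsDistantClique R ∧ HasThree R) ∧ BoxTwo R ∧
        ∀ S : Set (Submodule K V),
          (IsDistantClique S ∧ HasThree S) ∧ BoxTwo S → R ⊆ S → R = S) :=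
  zRegulus_iff_box_general R
end
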